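/- arXiv:1702.06422 — 3 statements merged into one kernel-verified Lean document; each statement's English description precedes it below -/
import Mathlib

section
/- For n ≥ 0, ∫_{-1}^{0} w_n(y) dy = B_n, the n-th Bernoulli number (with B_1 = -1/2). -/
def stirling2 : ℕ → ℕ → ℕ
  | 0, 0 => 1
  | 0, _ + 1 => 0
  | _ + 1, 0 => 0
  | n + 1, k + 1 => (k + 1) * stirling2 n (k + 1) + stirling2 n k

/-- The geometric polynomials `w_n(y) = ∑_{k=0}^n S(n,k)·k!·y^k`. -/
def geomPoly (n : ℕ) (y : ℝ) : ℝ :=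
  ∑ k ∈ Finset.range (n + 1), (stirling2 n k : ℝ) * (Nat.factorial k : ℝ) * y ^ k

/-!
Integrating term by term, `∫_{-1}^0 w_n = ∑_k (-1)^k k! S(n,k) / (k+1) =: a_n`. The sequence `a`
satisfies the recursion `∑_{i<n} C(n,i) a_i = [n = 1]` that determines the Bernoulli numbers:
by `S(n+1,k+1) = ∑_i C(n,i) S(i,k)`, the full sum `∑_{i≤n} C(n,i) a_i` is `a_n` plus
`∑_k (-1)^k k! S(n,k+1)`, and the recurrence of `S` makes the latter sum telescope to `[n = 1]`.
-/

open Finset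

theorem stirling2_eq_stirlingSecond : stirling2 = Nat.stirlingSecond := by
  funext n k
  induction n generalizing k with
  | zero => cases k <;> rfl
  | succ n ih => cases k <;> simp [stirling2, Nat.stirlingSecond, ih]

theorem Finset.sum_range_succ_choose_mul {R : Type*} [Semiring R] (n : ℕ) (f : ℕ → R) :
    ∑ i ∈ range (n + 2), ((n + 1).choose i : R) * f i
      = ∑ i ∈ range (n + 1), (n.choose i : R) * f i
        + ∑ i ∈ range (n + 1), (n.choose i : R) * f (i + 1) := by
  rw [sum_range_succ' _ (n + 1), sum_range_succ' (fun i => (n.choose i : R) * f i)]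
  have htop : ∑ i ∈ range (n + 1), (n.choose (i + 1) : R) * f (i + 1)
      = ∑ i ∈ range n, (n.choose (i + 1) : R) * f (i + 1) := by
    simp [sum_range_succ]
  simp only [Nat.choose_succ_succ', Nat.cast_add, add_mul, sum_add_distrib, htop,
    Nat.choose_zero_right, Nat.cast_one, one_mul]
  abel

namespace Nat

theorem stirlingSecond_succ_succ_eq_sum_choose (n k : ℕ) :
    stirlingSecond (n + 1) (k + 1) = ∑ i ∈ range (n + 1), n.choose i * stirlingSecond i k := by
  induction n generalizing k with
  | zero => cases k <;> rfl
  | succ n ih =>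
    have hpascal := Finset.sum_range_succ_choose_mul (R := ℕ) n (fun i => stirlingSecond i k)
    simp only [Nat.cast_id] at hpascal
    rw [hpascal, ← ih]
    cases k with
    | zero => simp [stirlingSecond_succ_succ]
    | succ j =>
      have hshift : ∑ i ∈ range (n + 1), n.choose i * stirlingSecond (i + 1) (j + 1)
          = (j + 1) * stirlingSecond (n + 1) (j + 2) + stirlingSecond (n + 1) (j + 1) := by
        simp only [stirlingSecond_succ_succ, mul_add, sum_add_distrib, mul_left_comm _ (j + 1),
          ← mul_sum, ← ih]
      rw [hshift, stirlingSecond_succ_succ (n + 1) (j + 1)]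
      ring

theorem sum_range_stirlingSecond_mul_of_lt {R : Type*} [Semiring R] {n N : ℕ} (h : n < N)
    (f : ℕ → R) :
    ∑ k ∈ range N, (stirlingSecond n k : R) * f k
      = ∑ k ∈ range (n + 1), (stirlingSecond n k : R) * f k := by
  refine (sum_subset (range_subset_range.2 h) fun k _ hk => ?_).symm
  rw [mem_range, not_lt] at hk
  simp [stirlingSecond_eq_zero_of_lt hk]

theorem sum_range_neg_one_pow_mul_factorial_mul_stirlingSecond_succ {R : Type*} [CommRing R]
    (n : ℕ) :
    ∑ k ∈ range (n + 1), (-1 : R) ^ k * k ! * stirlingSecond n (k + 1) = if n = 1 then 1 else 0 := by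
  cases n with
  | zero => simp
  | succ m =>
    set f : ℕ → R := fun k => (-1) ^ k * k ! * stirlingSecond m k
    have htel : ∀ k, (-1 : R) ^ k * k ! * stirlingSecond (m + 1) (k + 1) = f k - f (k + 1) := by
      intro k
      simp only [f, stirlingSecond_succ_succ, factorial_succ]
      push_cast
      ring
    rw [sum_congr rfl fun k _ => htel k, sum_range_sub']
    simp only [f, stirlingSecond_eq_zero_of_lt (by omega : m < m + 1 + 1)]
    cases m <;> simp

end Nat

open Nat

def bernoulliStirling (n : ℕ) : ℚ :=
  ∑ k ∈ range (n + 1), (stirlingSecond n k : ℚ) * ((-1) ^ k * k ! / (k + 1))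

theorem sum_range_choose_mul_bernoulliStirling (n : ℕ) :
    ∑ i ∈ range n, (n.choose i : ℚ) * bernoulliStirling i = if n = 1 then 1 else 0 := by
  set c : ℕ → ℚ := fun k => (-1) ^ k * k ! / (k + 1)
  have hext : ∀ i ∈ range (n + 1), (n.choose i : ℚ) * bernoulliStirling i
      = ∑ k ∈ range (n + 1), (n.choose i : ℚ) * ((stirlingSecond i k : ℚ) * c k) := by
    intro i hi
    rw [bernoulliStirling, ← sum_range_stirlingSecond_mul_of_lt (mem_range.1 hi), mul_sum]
  have hfull : ∑ i ∈ range (n + 1), (n.choose i : ℚ) * bernoulliStirling i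
      = bernoulliStirling n + ∑ k ∈ range (n + 1), (-1 : ℚ) ^ k * k ! * stirlingSecond n (k + 1) :=
    calc ∑ i ∈ range (n + 1), (n.choose i : ℚ) * bernoulliStirling i
        = ∑ k ∈ range (n + 1), (stirlingSecond (n + 1) (k + 1) : ℚ) * c k := by
          rw [sum_congr rfl hext, sum_comm]
          refine sum_congr rfl fun k _ => ?_
          simp only [stirlingSecond_succ_succ_eq_sum_choose, cast_sum, cast_mul, sum_mul, mul_assoc]
      _ = ∑ k ∈ range (n + 1),
            ((stirlingSecond n k : ℚ) * c k + (-1 : ℚ) ^ k * k ! * stirlingSecond n (k + 1)) := by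
          refine sum_congr rfl fun k _ => ?_
          simp only [c, stirlingSecond_succ_succ]
          push_cast
          field_simp
          ring
      _ = _ := sum_add_distrib
  rw [sum_range_succ, choose_self, cast_one, one_mul, add_comm,
    sum_range_neg_one_pow_mul_factorial_mul_stirlingSecond_succ] at hfull
  exact add_left_cancel hfull

theorem eq_bernoulli_of_sum_range_choose {a : ℕ → ℚ}
    (h : ∀ n, ∑ k ∈ range n, (n.choose k : ℚ) * a k = if n = 1 then 1 else 0) :
    a = bernoulli := by
  funext n
  induction n using Nat.strong_induction_on with
  | _ n ih =>
    have hsum := (h (n + 1)).trans (sum_bernoulli (n + 1)).symm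
    rw [sum_range_succ, sum_range_succ, sum_congr rfl fun k hk => by rw [ih k (mem_range.1 hk)],
      add_right_inj, choose_succ_self_right] at hsum
    exact mul_left_cancel₀ (by positivity) hsum

theorem integral_pow_neg_one_zero (k : ℕ) : ∫ y in (-1 : ℝ)..0, y ^ k = (-1) ^ k / (k + 1) := by
  rw [integral_pow, zero_pow (succ_ne_zero k), pow_succ]
  ring

theorem integral_geomPoly (n : ℕ) :
    ∫ y in (-1 : ℝ)..0, geomPoly n y = (bernoulli n : ℝ) := by
  unfold geomPoly
  rw [← eq_bernoulli_of_sum_range_choose sum_range_choose_mul_bernoulliStirling, bernoulliStirling,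
    stirling2_eq_stirlingSecond, intervalIntegral.integral_finsetSum fun _ _ =>
    Continuous.intervalIntegrable (by fun_prop) _ _]
  push_cast
  refine sum_congr rfl fun k _ => ?_
  rw [intervalIntegral.integral_const_mul, integral_pow_neg_one_zero]
  ring
end

section
/- For n ≥ 1 and p ≥ 0, ∫_{0}^{1} B_{n,p}(t) dt = -p·B_{n,p}/(n+1). -/
/-!
Integrating termwise turns `∫₀¹ B_{n,p}` into `(∑_{k ≤ n} C(n+1,k) B_{k,p}) / (n+1)`, which is
`(B_{n+1,p}(1) - B_{n+1,p}) / (n+1)`. Pascal's rule and the defining recurrence give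
`B_{n+1,p}(1) = (p+1) B_{n,p}(1) - ((p+1)²/(p+2)) B_{n,p+1}(1)`, and by induction this yields
`B_{n+1,p}(1) = B_{n+1,p} - p B_{n,p}` for `n ≥ 1`.
-/

def pBernoulli : ℕ → ℕ → ℚ
  | 0, _ => 1
  | n + 1, p => p * pBernoulli n p - ((p + 1 : ℚ) ^ 2 / (p + 2)) * pBernoulli n (p + 1)

/-- The p-Bernoulli polynomials `B_{n,p}(x) = ∑ C(n,k) x^{n-k} B_{k,p}`. -/
def pBernoulliPoly (n p : ℕ) (x : ℝ) : ℝ :=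
  ∑ k ∈ Finset.range (n + 1), (n.choose k : ℝ) * x ^ (n - k) * (pBernoulli k p : ℝ)

open Finset

theorem intervalIntegral.integral_sum_choose_mul_pow_mul (n : ℕ) (b : ℕ → ℝ) :
    ∫ t in (0 : ℝ)..1, ∑ k ∈ range (n + 1), (n.choose k : ℝ) * t ^ (n - k) * b k
      = (∑ k ∈ range (n + 1), ((n + 1).choose k : ℝ) * b k) / (n + 1) := by
  rw [intervalIntegral.integral_finsetSum fun k _ => (by fun_prop : Continuous _).intervalIntegrable _ _,
    sum_div]
  refine sum_congr rfl fun k hk => ?_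
  have hkn : k ≤ n := Nat.lt_succ_iff.mp (mem_range.mp hk)
  have hchoose : (n.choose k : ℝ) * (n + 1) = (n + 1).choose k * ((n - k : ℕ) + 1) := by
    have h := Nat.choose_mul_succ_eq n k
    rw [Nat.sub_add_comm hkn] at h
    exact_mod_cast h
  simp_rw [mul_comm _ (b k), ← mul_assoc, intervalIntegral.integral_const_mul, integral_pow]
  field_simp
  linear_combination b k * hchoose

theorem pBernoulli_succ (n p : ℕ) :
    pBernoulli (n + 1) p = p * pBernoulli n p - ((p + 1 : ℚ) ^ 2 / (p + 2)) * pBernoulli n (p + 1) :=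
  rfl

namespace pBernoulli

/-- `B_{n,p}(1)`, computed in `ℚ`. -/
def atOne (n p : ℕ) : ℚ :=
  ∑ k ∈ range (n + 1), (n.choose k : ℚ) * pBernoulli k p

theorem atOne_succ (n p : ℕ) :
    atOne (n + 1) p = (p + 1) * atOne n p - ((p + 1 : ℚ) ^ 2 / (p + 2)) * atOne n (p + 1) := by
  rw [atOne, sum_choose_succ_mul (fun i _ => pBernoulli i p), atOne, atOne, mul_sum, mul_sum,
    ← sum_sub_distrib, ← sum_add_distrib]
  exact sum_congr rfl fun i _ => by rw [pBernoulli_succ]; ring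

theorem atOne_succ_eq (n p : ℕ) (hn : 1 ≤ n) :
    atOne (n + 1) p = pBernoulli (n + 1) p - p * pBernoulli n p := by
  induction n, hn using Nat.le_induction generalizing p with
  | base =>
    have hp2 : (p : ℚ) + 2 ≠ 0 := by positivity
    simp only [atOne, sum_range_succ, sum_range_zero, pBernoulli, Nat.choose]
    field_simp
    ring
  | succ n hn ih =>
    rw [atOne_succ, ih p, ih (p + 1), pBernoulli_succ (n + 1) p, pBernoulli_succ n p]
    push_cast
    ring

theorem sum_range_choose_succ_mul (n p : ℕ) (hn : 1 ≤ n) :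
    ∑ k ∈ range (n + 1), ((n + 1).choose k : ℚ) * pBernoulli k p = -p * pBernoulli n p := by
  have h := atOne_succ_eq n p hn
  rw [atOne, sum_range_succ, Nat.choose_self, Nat.cast_one, one_mul] at h
  linarith

end pBernoulli

theorem integral_pBernoulliPoly (n p : ℕ) (hn : 1 ≤ n) :
    ∫ t in (0 : ℝ)..1, pBernoulliPoly n p t = -(p : ℝ) * (pBernoulli n p : ℝ) / (n + 1) := by
  simp only [pBernoulliPoly, intervalIntegral.integral_sum_choose_mul_pow_mul]
  exact_mod_cast congrArg (fun q : ℚ => (q : ℝ) / (n + 1)) (pBernoulli.sum_range_choose_succ_mul n p hn)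
end

section
/- For non-negative integers n, m, p: ∑_{k=0}^{m} B_{n,p}(k+1) = (B_{n+1}(m+1) - B_{n+1})/(n+1) + ((p+1)/(p+2)) · (B_{n,p+1}(m+1) - B_{n,p+1}). -/
/-- Evaluation of the `n`-th Bernoulli polynomial at a real number. -/
noncomputable def bernoulliPolyR (n : ℕ) (x : ℝ) : ℝ :=
  Polynomial.eval x ((Polynomial.bernoulli n).map (algebraMap ℚ ℝ))

/-! The defining recurrence of the numbers `B_{n,p}` lifts, through Pascal's rule, to the
polynomials: `B_{n+1,p}(x) = (x + p) B_{n,p}(x) - ((p+1)^2/(p+2)) B_{n,p+1}(x)`. Induction on `n`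
then gives the difference equation
`B_{n,p}(x + 1) = x^n + ((p+1)/(p+2)) (B_{n,p+1}(x + 1) - B_{n,p+1}(x))`.
Summing it over `x = 0, …, m`, the first term is the classical power sum, expressed through
`B_{n+1}`, and the second telescopes. -/

open Finset

lemma pBernoulliPoly_at_zero (n p : ℕ) : pBernoulliPoly n p 0 = pBernoulli n p := by
  rw [pBernoulliPoly, sum_range_succ, sum_eq_zero fun k hk ↦ by
    rw [zero_pow (Nat.sub_ne_zero_of_lt (mem_range.mp hk))]; ring]
  simp

lemma pBernoulliPoly_succ (n p : ℕ) (x : ℝ) :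
    pBernoulliPoly (n + 1) p x = (x + p) * pBernoulliPoly n p x
      - ((p + 1 : ℝ) ^ 2 / (p + 2)) * pBernoulliPoly n (p + 1) x := by
  have pascal := sum_choose_succ_mul (R := ℝ) (fun i j ↦ x ^ j * (pBernoulli i p : ℝ)) n
  simp only [← mul_assoc] at pascal
  rw [pBernoulliPoly, pascal, pBernoulliPoly, pBernoulliPoly, add_mul]
  simp only [mul_sum, ← sum_add_distrib, ← sum_sub_distrib]
  refine sum_congr rfl fun i hi ↦ ?_
  rw [Nat.sub_add_comm (mem_range_succ_iff.mp hi), pBernoulli]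
  push_cast
  ring

lemma pBernoulliPoly_add_one (n p : ℕ) (x : ℝ) :
    pBernoulliPoly n p (x + 1) = x ^ n + ((p + 1 : ℝ) / (p + 2))
      * (pBernoulliPoly n (p + 1) (x + 1) - pBernoulliPoly n (p + 1) x) := by
  induction n generalizing p with
  | zero => simp [pBernoulliPoly, pBernoulli]
  | succ n ih =>
    rw [pBernoulliPoly_succ, pBernoulliPoly_succ n (p + 1), pBernoulliPoly_succ n (p + 1), ih p,
      ih (p + 1)]
    push_cast
    field_simp
    ring

lemma bernoulliPolyR_succ_natCast (n m : ℕ) :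
    bernoulliPolyR (n + 1) m = bernoulli (n + 1) + (n + 1) * ∑ k ∈ range m, (k : ℝ) ^ n := by
  have := congrArg (algebraMap ℚ ℝ) (Polynomial.bernoulli_succ_eval m n)
  rw [bernoulliPolyR, ← map_natCast (algebraMap ℚ ℝ) m, Polynomial.eval_map,
    Polynomial.eval₂_at_apply]
  simpa using this

theorem sum_pBernoulliPoly (n m p : ℕ) :
    ∑ k ∈ Finset.range (m + 1), pBernoulliPoly n p (k + 1)
      = (bernoulliPolyR (n + 1) (m + 1) - (bernoulli (n + 1) : ℝ)) / (n + 1)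
        + ((p + 1 : ℝ) / (p + 2))
          * (pBernoulliPoly n (p + 1) (m + 1) - (pBernoulli n (p + 1) : ℝ)) := by
  have telescope := sum_range_sub (fun k : ℕ ↦ pBernoulliPoly n (p + 1) k) (m + 1)
  have power_sum := bernoulliPolyR_succ_natCast n (m + 1)
  push_cast at telescope power_sum
  rw [sum_congr rfl fun (k : ℕ) _ ↦ pBernoulliPoly_add_one n p k, sum_add_distrib, ← mul_sum,
    telescope, power_sum, pBernoulliPoly_at_zero]
  field_simp
  ring
end
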